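/- arXiv:2404.03878 — 2 statements merged into one kernel-verified Lean document; each statement's English description precedes it below -/
import Mathlib

section
/- For any Q₀, Q₁ ∈ S_d^{++}, the squared Bures–Wasserstein distance is comparable to the squared Frobenius distance: (1/2)·[λ_min(Q₀)·λ_max(Q₀)^{−2} / (1 + λ_min(Q₀)^{−1}·λ_max(Q₁))]·‖Q₁ − Q₀‖_F² ≤ W²(Q₀, Q₁) ≤ [λ_max(Q₀)·λ_min(Q₀)^{−2} / (1 + λ_max(Q₀)^{−1}·λ_min(Q₁))]·‖Q₁ − Q₀‖_F². -/
open MeasureTheory ProbabilityTheory Filter Finset Matrix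
open scoped BigOperators ENNReal NNReal Topology

noncomputable section

namespace BWFR

attribute [local instance] Matrix.frobeniusSeminormedAddCommGroup
  Matrix.frobeniusNormedAddCommGroup Matrix.frobeniusNormedSpace

/-- Euclidean norm on `Fin p → ℝ`. -/
def euclNorm {p : ℕ} (v : Fin p → ℝ) : ℝ := Real.sqrt (∑ k, v k ^ 2)

/-- Frobenius norm of a matrix. -/
def frobNorm {d : ℕ} (A : Matrix (Fin d) (Fin d) ℝ) : ℝ :=
  Real.sqrt (∑ i, ∑ j, A i j ^ 2)

/-- Frobenius inner product. -/
def frobInner {d : ℕ} (A B : Matrix (Fin d) (Fin d) ℝ) : ℝ := ∑ i, ∑ j, A i j * B i j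

/-- The positive semidefinite square root of a PSD matrix (junk value `0` otherwise). -/
def msqrt {d : ℕ} (A : Matrix (Fin d) (Fin d) ℝ) : Matrix (Fin d) (Fin d) ℝ :=
  letI := Classical.propDecidable
  if h : A.PosSemidef then
    h.1.eigenvectorUnitary.1 * diagonal ((↑) ∘ (Real.sqrt ·) ∘ h.1.eigenvalues) *
      (star h.1.eigenvectorUnitary : Matrix (Fin d) (Fin d) ℝ) else 0

/-- Squared Bures–Wasserstein distance. -/
def BW2 {d : ℕ} (A B : Matrix (Fin d) (Fin d) ℝ) : ℝ :=
  A.trace + B.trace - 2 * (msqrt (msqrt A * B * msqrt A)).trace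

/-- Bures–Wasserstein distance. -/
def BW {d : ℕ} (A B : Matrix (Fin d) (Fin d) ℝ) : ℝ := Real.sqrt (BW2 A B)

/-- The optimal transport map `T_Q^S = S^{1/2} (S^{1/2} Q S^{1/2})^{-1/2} S^{1/2}`. -/
def otMap {d : ℕ} (Q S : Matrix (Fin d) (Fin d) ℝ) : Matrix (Fin d) (Fin d) ℝ :=
  msqrt S * (msqrt (msqrt S * Q * msqrt S))⁻¹ * msqrt S

/-- Smallest eigenvalue of a symmetric matrix, via the quadratic form. -/
def eigMin {m : Type*} [Fintype m] (A : Matrix m m ℝ) : ℝ :=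
  sInf {r | ∃ v : m → ℝ, (∑ k, v k ^ 2) = 1 ∧ r = v ⬝ᵥ A.mulVec v}

/-- Largest eigenvalue of a symmetric matrix, via the quadratic form. -/
def eigMax {m : Type*} [Fintype m] (A : Matrix m m ℝ) : ℝ :=
  sSup {r | ∃ v : m → ℝ, (∑ k, v k ^ 2) = 1 ∧ r = v ⬝ᵥ A.mulVec v}

/-- Strict Loewner order `A ≺ B`. -/
def loewnerLT {d : ℕ} (A B : Matrix (Fin d) (Fin d) ℝ) : Prop := (B - A).PosDef

/-- The set of symmetric matrices. -/
def symmSet (d : ℕ) : Set (Matrix (Fin d) (Fin d) ℝ) := {A | A.IsSymm}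

/-- The differential `dT_Q^S` of `Q ↦ T_Q^S` along the set of symmetric matrices. -/
def dOT {d : ℕ} (S Q : Matrix (Fin d) (Fin d) ℝ) :
    Matrix (Fin d) (Fin d) ℝ →L[ℝ] Matrix (Fin d) (Fin d) ℝ :=
  fderivWithin ℝ (fun R => otMap R S) (symmSet d) Q

def gammaPoly (c C t : ℝ) : ℝ := c * (max t 1) ^ C

variable {d : ℕ}

private lemma quad_spectral {A : Matrix (Fin d) (Fin d) ℝ} (hA : A.IsHermitian) (v : Fin d → ℝ) :
    ∃ w : Fin d → ℝ, (∑ k, w k ^ 2) = (∑ k, v k ^ 2) ∧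
      v ⬝ᵥ A.mulVec v = ∑ i, hA.eigenvalues i * w i ^ 2 ∧
      v ⬝ᵥ (A * A).mulVec v = ∑ i, hA.eigenvalues i ^ 2 * w i ^ 2 := by
  classical
  set U : Matrix (Fin d) (Fin d) ℝ := (hA.eigenvectorUnitary : Matrix (Fin d) (Fin d) ℝ) with hU
  have hstar : star U = Uᵀ := by
    rw [Matrix.star_eq_conjTranspose, Matrix.conjTranspose_eq_transpose_of_trivial]
  have hUUt : U * Uᵀ = 1 := by
    have := (Matrix.mem_unitaryGroup_iff).mp hA.eigenvectorUnitary.2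
    rwa [hstar] at this
  have hUtU : Uᵀ * U = 1 := by
    have := (Matrix.mem_unitaryGroup_iff').mp hA.eigenvectorUnitary.2
    rwa [hstar] at this
  set w : Fin d → ℝ := Uᵀ.mulVec v with hw
  have hkey : ∀ f : Fin d → ℝ, v ⬝ᵥ (U * diagonal f * Uᵀ).mulVec v = ∑ i, f i * w i ^ 2 := by
    intro f
    rw [← Matrix.mulVec_mulVec, ← Matrix.mulVec_mulVec, Matrix.dotProduct_mulVec v U]
    have : v ᵥ* U = w := by rw [hw, Matrix.mulVec_transpose]
    rw [this]
    simp only [Matrix.mulVec_diagonal, dotProduct]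
    exact Finset.sum_congr rfl fun i _ => by ring
  have hAeq : A = U * diagonal hA.eigenvalues * Uᵀ := by
    have := hA.spectral_theorem
    rwa [Unitary.conjStarAlgAut_apply, ← hU, hstar, RCLike.ofReal_real_eq_id,
      Function.id_comp] at this
  have hA2eq : A * A = U * diagonal (fun i => hA.eigenvalues i * hA.eigenvalues i) * Uᵀ := by
    conv_lhs => rw [hAeq]
    calc (U * diagonal hA.eigenvalues * Uᵀ) * (U * diagonal hA.eigenvalues * Uᵀ)
        = U * diagonal hA.eigenvalues * (Uᵀ * U) * (diagonal hA.eigenvalues * Uᵀ) := by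
          noncomm_ring
      _ = U * (diagonal hA.eigenvalues * diagonal hA.eigenvalues) * Uᵀ := by
          rw [hUtU]; noncomm_ring
      _ = _ := by rw [Matrix.diagonal_mul_diagonal]
  refine ⟨w, ?_, ?_, ?_⟩
  · have h1 : (∑ k, w k ^ 2) = w ⬝ᵥ w := by
      simp [dotProduct, pow_two]
    have h2 : (∑ k, v k ^ 2) = v ⬝ᵥ v := by
      simp [dotProduct, pow_two]
    rw [h1, h2, hw, Matrix.dotProduct_mulVec (Uᵀ *ᵥ v) Uᵀ v, Matrix.vecMul_transpose,
      Matrix.mulVec_mulVec, hUUt, Matrix.one_mulVec]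
  · have h := hkey hA.eigenvalues
    rw [← hAeq] at h
    exact h
  · have h := hkey (fun i => hA.eigenvalues i * hA.eigenvalues i)
    rw [← hA2eq] at h
    rw [h]
    exact Finset.sum_congr rfl fun i _ => by ring


private lemma basis_unit {A : Matrix (Fin d) (Fin d) ℝ} (hA : A.IsHermitian) (j : Fin d) :
    (∑ k, (hA.eigenvectorBasis j : EuclideanSpace ℝ (Fin d)) k ^ 2) = 1 := by
  have hnorm : ‖hA.eigenvectorBasis j‖ = 1 := hA.eigenvectorBasis.orthonormal.1 j
  rw [EuclideanSpace.norm_eq] at hnorm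
  have := congrArg (fun x : ℝ => x ^ 2) hnorm
  simp only [one_pow] at this
  rw [Real.sq_sqrt (by positivity)] at this
  simpa [sq_abs] using this

private lemma quad_basis {A : Matrix (Fin d) (Fin d) ℝ} (hA : A.IsHermitian) (j : Fin d) :
    (hA.eigenvectorBasis j : EuclideanSpace ℝ (Fin d)) ⬝ᵥ
      A.mulVec (hA.eigenvectorBasis j : EuclideanSpace ℝ (Fin d)) = hA.eigenvalues j := by
  have h1 : A.mulVec (hA.eigenvectorBasis j : EuclideanSpace ℝ (Fin d)) =
      hA.eigenvalues j • (hA.eigenvectorBasis j : EuclideanSpace ℝ (Fin d)) :=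
    hA.mulVec_eigenvectorBasis j
  rw [h1, dotProduct_smul]
  have : ((hA.eigenvectorBasis j : EuclideanSpace ℝ (Fin d)) ⬝ᵥ
      (hA.eigenvectorBasis j : EuclideanSpace ℝ (Fin d))) = 1 := by
    have := basis_unit hA j
    simpa [dotProduct, pow_two] using this
  rw [this]
  simp

/-- Package of Rayleigh-quotient facts for a symmetric matrix. -/
private lemma eigen_package {A : Matrix (Fin d) (Fin d) ℝ} (hA : A.IsHermitian) (hd : 0 < d) :
    (∃ u : Fin d → ℝ, (∑ k, u k ^ 2) = 1 ∧ A.mulVec u = eigMin A • u ∧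
        u ⬝ᵥ A.mulVec u = eigMin A) ∧
    (∃ u : Fin d → ℝ, (∑ k, u k ^ 2) = 1 ∧ A.mulVec u = eigMax A • u ∧
        u ⬝ᵥ A.mulVec u = eigMax A) ∧
    (∀ v : Fin d → ℝ, eigMin A * (∑ k, v k ^ 2) ≤ v ⬝ᵥ A.mulVec v) ∧
    (∀ v : Fin d → ℝ, v ⬝ᵥ A.mulVec v ≤ eigMax A * (∑ k, v k ^ 2)) := by
  classical
  haveI : Nonempty (Fin d) := ⟨⟨0, hd⟩⟩
  obtain ⟨j₀, -, hj₀⟩ := Finset.exists_min_image Finset.univ hA.eigenvalues ⟨_, Finset.mem_univ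
    (Classical.arbitrary (Fin d))⟩
  obtain ⟨j₁, -, hj₁⟩ := Finset.exists_max_image Finset.univ hA.eigenvalues ⟨_, Finset.mem_univ
    (Classical.arbitrary (Fin d))⟩
  have hlow : ∀ v : Fin d → ℝ, hA.eigenvalues j₀ * (∑ k, v k ^ 2) ≤ v ⬝ᵥ A.mulVec v := by
    intro v
    obtain ⟨w, hw, hq, -⟩ := quad_spectral hA v
    rw [hq, ← hw, Finset.mul_sum]
    exact Finset.sum_le_sum fun i _ => by
      have := hj₀ i (Finset.mem_univ i)
      nlinarith [sq_nonneg (w i)]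
  have hhigh : ∀ v : Fin d → ℝ, v ⬝ᵥ A.mulVec v ≤ hA.eigenvalues j₁ * (∑ k, v k ^ 2) := by
    intro v
    obtain ⟨w, hw, hq, -⟩ := quad_spectral hA v
    rw [hq, ← hw, Finset.mul_sum]
    exact Finset.sum_le_sum fun i _ => by
      have := hj₁ i (Finset.mem_univ i)
      nlinarith [sq_nonneg (w i)]
  set S := {r | ∃ v : Fin d → ℝ, (∑ k, v k ^ 2) = 1 ∧ r = v ⬝ᵥ A.mulVec v} with hS
  have hmemS : ∀ j, hA.eigenvalues j ∈ S := fun j =>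
    ⟨_, basis_unit hA j, (quad_basis hA j).symm⟩
  have hSlb : ∀ r ∈ S, hA.eigenvalues j₀ ≤ r := by
    rintro r ⟨v, hv1, rfl⟩
    have := hlow v
    rw [hv1, mul_one] at this
    exact this
  have hSub : ∀ r ∈ S, r ≤ hA.eigenvalues j₁ := by
    rintro r ⟨v, hv1, rfl⟩
    have := hhigh v
    rw [hv1, mul_one] at this
    exact this
  have hmin : eigMin A = hA.eigenvalues j₀ := by
    refine le_antisymm (csInf_le ⟨_, hSlb⟩ (hmemS j₀)) (le_csInf ⟨_, hmemS j₀⟩ hSlb)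
  have hmax : eigMax A = hA.eigenvalues j₁ := by
    refine le_antisymm (csSup_le ⟨_, hmemS j₁⟩ hSub) (le_csSup ⟨_, hSub⟩ (hmemS j₁))
  refine ⟨⟨_, basis_unit hA j₀, ?_, ?_⟩, ⟨_, basis_unit hA j₁, ?_, ?_⟩, ?_, ?_⟩
  · rw [hmin]
    exact hA.mulVec_eigenvectorBasis j₀
  · rw [hmin]; exact quad_basis hA j₀
  · rw [hmax]
    exact hA.mulVec_eigenvectorBasis j₁
  · rw [hmax]; exact quad_basis hA j₁
  · intro v; rw [hmin]; exact hlow v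
  · intro v; rw [hmax]; exact hhigh v


private lemma psd_transpose_eq' {A : Matrix (Fin d) (Fin d) ℝ} (hA : A.PosSemidef) : Aᵀ = A := by
  rw [← Matrix.conjTranspose_eq_transpose_of_trivial]
  exact hA.1

private lemma eigMin_pos {A : Matrix (Fin d) (Fin d) ℝ} (hA : A.PosDef) (hd : 0 < d) :
    0 < eigMin A := by
  obtain ⟨⟨u, hu1, -, hq⟩, -, -, -⟩ := eigen_package hA.isHermitian hd
  have hu0 : u ≠ 0 := fun h => by simp [h] at hu1
  have h := hA.dotProduct_mulVec_pos hu0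
  rw [← hq]
  simpa using h

private lemma eigMin_nonneg {A : Matrix (Fin d) (Fin d) ℝ} (hA : A.PosSemidef) (hd : 0 < d) :
    0 ≤ eigMin A := by
  obtain ⟨⟨u, hu1, -, hq⟩, -, -, -⟩ := eigen_package hA.isHermitian hd
  have h := hA.dotProduct_mulVec_nonneg u
  rw [← hq]
  simpa using h

private lemma eigMin_le_eigMax {A : Matrix (Fin d) (Fin d) ℝ} (hA : A.IsHermitian) (hd : 0 < d) :
    eigMin A ≤ eigMax A := by
  obtain ⟨⟨u, hu1, -, hq⟩, -, -, hub⟩ := eigen_package hA hd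
  have := hub u
  rw [hu1, mul_one, hq] at this
  exact this

private lemma eigMax_nonneg {A : Matrix (Fin d) (Fin d) ℝ} (hA : A.PosSemidef) (hd : 0 < d) :
    0 ≤ eigMax A :=
  le_trans (eigMin_nonneg hA hd) (eigMin_le_eigMax hA.1 hd)

private lemma eigenvalue_le_eigMax {A : Matrix (Fin d) (Fin d) ℝ} (hA : A.IsHermitian)
    (hd : 0 < d) (i : Fin d) : hA.eigenvalues i ≤ eigMax A := by
  obtain ⟨-, -, -, hub⟩ := eigen_package hA hd
  have h := hub (hA.eigenvectorBasis i : EuclideanSpace ℝ (Fin d))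
  rw [quad_basis hA i, basis_unit hA i, mul_one] at h
  exact h

private lemma mulVec_sq_le {N : Matrix (Fin d) (Fin d) ℝ} (hN : N.PosSemidef) (hd : 0 < d)
    (v : Fin d → ℝ) :
    (∑ k, (N.mulVec v) k ^ 2) ≤ (eigMax N)^2 * ∑ k, v k ^ 2 := by
  obtain ⟨w, hw, -, hq2⟩ := quad_spectral hN.1 v
  have h1 : (∑ k, (N.mulVec v) k ^ 2) = (N.mulVec v) ⬝ᵥ (N.mulVec v) := by
    simp [dotProduct, pow_two]
  have h2 : (N.mulVec v) ⬝ᵥ (N.mulVec v) = v ⬝ᵥ (N * N).mulVec v := by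
    rw [Matrix.dotProduct_mulVec (N.mulVec v) N v, ← Matrix.mulVec_transpose,
      psd_transpose_eq' hN, Matrix.mulVec_mulVec, dotProduct_comm]
  rw [h1, h2, hq2, ← hw, Finset.mul_sum]
  refine Finset.sum_le_sum fun i _ => ?_
  have h3 := hN.eigenvalues_nonneg i
  have h4 := eigenvalue_le_eigMax hN.1 hd i
  refine mul_le_mul_of_nonneg_right ?_ (sq_nonneg (w i))
  nlinarith


private lemma conj_mul_conj (U X Y : Matrix (Fin d) (Fin d) ℝ) (h : star U * U = 1) :
    U * X * star U * (U * Y * star U) = U * (X * Y) * star U := by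
  calc U * X * star U * (U * Y * star U) = U * X * (star U * U) * Y * star U := by
        simp only [mul_assoc]
    _ = _ := by rw [h, mul_one]; simp only [mul_assoc]

private lemma msqrt_eq {A : Matrix (Fin d) (Fin d) ℝ} (hA : A.PosSemidef) :
    msqrt A = (hA.1.eigenvectorUnitary : Matrix (Fin d) (Fin d) ℝ) *
      diagonal ((fun x : ℝ => x) ∘ (Real.sqrt ·) ∘ hA.1.eigenvalues) * star (hA.1.eigenvectorUnitary : Matrix (Fin d) (Fin d) ℝ) := by
  rw [msqrt, dif_pos hA]
  congr!

private lemma msqrt_mul_self {A : Matrix (Fin d) (Fin d) ℝ} (hA : A.PosSemidef) :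
    msqrt A * msqrt A = A := by
  rw [msqrt_eq hA]
  have hUU := (Matrix.mem_unitaryGroup_iff').mp hA.1.eigenvectorUnitary.2
  have hspec := hA.1.spectral_theorem
  rw [Unitary.conjStarAlgAut_apply] at hspec
  conv_rhs => rw [hspec]
  rw [conj_mul_conj _ _ _ hUU, diagonal_mul_diagonal]
  refine congrArg (fun M => _ * M * _) (congrArg diagonal (funext fun i => ?_))
  simp [Real.mul_self_sqrt (hA.eigenvalues_nonneg i)]

private lemma msqrt_posSemidef {A : Matrix (Fin d) (Fin d) ℝ} (hA : A.PosSemidef) :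
    (msqrt A).PosSemidef := by
  rw [msqrt_eq hA, Matrix.star_eq_conjTranspose]
  exact (posSemidef_diagonal_iff.mpr fun i => by simp [Real.sqrt_nonneg]).mul_mul_conjTranspose_same _

private lemma trace_conj_eq (A G : Matrix (Fin d) (Fin d) ℝ) :
    (Gᵀ * A * G).trace = ∑ j, (fun i => G i j) ⬝ᵥ A.mulVec (fun i => G i j) := by
  simp only [Matrix.trace, Matrix.diag_apply, Matrix.mul_apply, Matrix.transpose_apply,
    dotProduct, Matrix.mulVec, Finset.sum_mul, Finset.mul_sum]
  refine Finset.sum_congr rfl fun j _ => ?_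
  rw [Finset.sum_comm]
  exact Finset.sum_congr rfl fun i _ => Finset.sum_congr rfl fun k _ => by ring

private lemma le_trace_conj {A : Matrix (Fin d) (Fin d) ℝ} {c : ℝ}
    (hc : ∀ v : Fin d → ℝ, c * (∑ k, v k ^ 2) ≤ v ⬝ᵥ A.mulVec v)
    (G : Matrix (Fin d) (Fin d) ℝ) :
    c * (∑ i, ∑ j, G i j ^ 2) ≤ (Gᵀ * A * G).trace := by
  rw [trace_conj_eq, show (∑ i, ∑ j, G i j ^ 2) = ∑ j, ∑ i, G i j ^ 2 from Finset.sum_comm]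
  calc c * ∑ j, ∑ i, G i j ^ 2 = ∑ j, c * ∑ i, G i j ^ 2 := Finset.mul_sum _ _ _
    _ ≤ _ := Finset.sum_le_sum fun j _ => hc _

private lemma trace_conj_le {A : Matrix (Fin d) (Fin d) ℝ} {C : ℝ}
    (hC : ∀ v : Fin d → ℝ, v ⬝ᵥ A.mulVec v ≤ C * (∑ k, v k ^ 2))
    (G : Matrix (Fin d) (Fin d) ℝ) :
    (Gᵀ * A * G).trace ≤ C * (∑ i, ∑ j, G i j ^ 2) := by
  rw [trace_conj_eq, show (∑ i, ∑ j, G i j ^ 2) = ∑ j, ∑ i, G i j ^ 2 from Finset.sum_comm]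
  calc (∑ j, (fun i => G i j) ⬝ᵥ A.mulVec (fun i => G i j))
      ≤ ∑ j, C * ∑ i, G i j ^ 2 := Finset.sum_le_sum fun j _ => hC _
    _ = C * ∑ j, ∑ i, G i j ^ 2 := (Finset.mul_sum _ _ _).symm

private lemma trace_symm_sq {W : Matrix (Fin d) (Fin d) ℝ} (hW : Wᵀ = W) :
    (W * W).trace = ∑ i, ∑ j, W i j ^ 2 := by
  simp only [Matrix.trace, Matrix.diag_apply, Matrix.mul_apply]
  refine Finset.sum_congr rfl fun i _ => Finset.sum_congr rfl fun j _ => ?_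
  have : W j i = W i j := congrFun (congrFun hW i) j
  rw [this]; ring

private lemma trace_mul_psd_ge {X S : Matrix (Fin d) (Fin d) ℝ} (hX : X.PosSemidef) {c : ℝ}
    (hc : ∀ v : Fin d → ℝ, c * (∑ k, v k ^ 2) ≤ v ⬝ᵥ S.mulVec v) :
    c * X.trace ≤ (X * S).trace := by
  set W := msqrt X with hWdef
  have hWW : W * W = X := msqrt_mul_self hX
  have hWt : Wᵀ = W := psd_transpose_eq' (msqrt_posSemidef hX)
  have h1 : (X * S).trace = (Wᵀ * S * W).trace := by
    rw [hWt, ← hWW, Matrix.trace_mul_cycle W S W]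
  have h2 : X.trace = ∑ i, ∑ j, W i j ^ 2 := by rw [← hWW, trace_symm_sq hWt]
  rw [h1, h2]
  exact le_trace_conj hc W


private lemma frobNorm_nonneg (A : Matrix (Fin d) (Fin d) ℝ) : 0 ≤ frobNorm A :=
  Real.sqrt_nonneg _

private lemma frobNorm_sq (A : Matrix (Fin d) (Fin d) ℝ) :
    frobNorm A ^ 2 = ∑ i, ∑ j, A i j ^ 2 := by
  rw [frobNorm, Real.sq_sqrt]
  positivity

private lemma frobNorm_eq_norm (A : Matrix (Fin d) (Fin d) ℝ) : frobNorm A = ‖A‖ := by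
  rw [Matrix.frobenius_norm_def, frobNorm, Real.sqrt_eq_rpow]
  congr 1
  refine Finset.sum_congr rfl fun i _ => Finset.sum_congr rfl fun j _ => ?_
  rw [Real.norm_eq_abs, show (2:ℝ) = ((2:ℕ):ℝ) by norm_num, Real.rpow_natCast, sq_abs]

private lemma frobNorm_triangle (A B : Matrix (Fin d) (Fin d) ℝ) :
    frobNorm (A + B) ≤ frobNorm A + frobNorm B := by
  simp only [frobNorm_eq_norm]
  exact norm_add_le A B

private lemma frobInner_le (A B : Matrix (Fin d) (Fin d) ℝ) :
    frobInner A B ≤ frobNorm A * frobNorm B := by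
  have h1 : frobInner A B = ∑ p : Fin d × Fin d, A p.1 p.2 * B p.1 p.2 := by
    rw [frobInner, Fintype.sum_prod_type]
  have h2 : frobNorm A ^ 2 = ∑ p : Fin d × Fin d, A p.1 p.2 ^ 2 := by
    rw [frobNorm_sq, Fintype.sum_prod_type]
  have h3 : frobNorm B ^ 2 = ∑ p : Fin d × Fin d, B p.1 p.2 ^ 2 := by
    rw [frobNorm_sq, Fintype.sum_prod_type]
  have hcs := Finset.sum_mul_sq_le_sq_mul_sq Finset.univ (fun p : Fin d × Fin d => A p.1 p.2)
    (fun p : Fin d × Fin d => B p.1 p.2)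
  have h4 : frobInner A B ^ 2 ≤ (frobNorm A * frobNorm B) ^ 2 := by
    rw [mul_pow, h2, h3, h1]
    exact hcs
  have h5 : 0 ≤ frobNorm A * frobNorm B :=
    mul_nonneg (frobNorm_nonneg A) (frobNorm_nonneg B)
  nlinarith [h4, h5]

private lemma frobNorm_mul_right {N : Matrix (Fin d) (Fin d) ℝ} (hN : N.PosSemidef) (hd : 0 < d)
    (M : Matrix (Fin d) (Fin d) ℝ) :
    frobNorm (M * N) ≤ frobNorm M * eigMax N := by
  have hNt : Nᵀ = N := psd_transpose_eq' hN
  have hmax := eigMax_nonneg hN hd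
  have hsq : ∑ i, ∑ j, (M * N) i j ^ 2 ≤ (eigMax N)^2 * ∑ i, ∑ j, M i j ^ 2 := by
    have hrow : ∀ i, (∑ j, (M * N) i j ^ 2) ≤ (eigMax N)^2 * ∑ k, M i k ^ 2 := by
      intro i
      have heq : ∀ j, (M * N) i j = (N.mulVec (fun k => M i k)) j := by
        intro j
        simp only [Matrix.mul_apply, Matrix.mulVec, dotProduct]
        exact Finset.sum_congr rfl fun k _ => by
          have : N j k = N k j := congrFun (congrFun hNt k) j
          rw [this]; ring
      calc (∑ j, (M * N) i j ^ 2) = ∑ j, (N.mulVec (fun k => M i k)) j ^ 2 :=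
            Finset.sum_congr rfl fun j _ => by rw [heq j]
        _ ≤ _ := mulVec_sq_le hN hd _
    calc (∑ i, ∑ j, (M * N) i j ^ 2) ≤ ∑ i, (eigMax N)^2 * ∑ k, M i k ^ 2 :=
          Finset.sum_le_sum fun i _ => hrow i
      _ = (eigMax N)^2 * ∑ i, ∑ j, M i j ^ 2 := (Finset.mul_sum _ _ _).symm
  have := Real.sqrt_le_sqrt hsq
  rw [frobNorm]
  refine le_trans this ?_
  rw [Real.sqrt_mul (sq_nonneg _), Real.sqrt_sq hmax, ← frobNorm, mul_comm]

private lemma frobNorm_mul_left {N : Matrix (Fin d) (Fin d) ℝ} (hN : N.PosSemidef) (hd : 0 < d)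
    (M : Matrix (Fin d) (Fin d) ℝ) :
    frobNorm (N * M) ≤ eigMax N * frobNorm M := by
  have hmax := eigMax_nonneg hN hd
  have hsq : ∑ i, ∑ j, (N * M) i j ^ 2 ≤ (eigMax N)^2 * ∑ i, ∑ j, M i j ^ 2 := by
    have hcol : ∀ j, (∑ i, (N * M) i j ^ 2) ≤ (eigMax N)^2 * ∑ k, M k j ^ 2 := by
      intro j
      have heq : ∀ i, (N * M) i j = (N.mulVec (fun k => M k j)) i := by
        intro i
        simp only [Matrix.mul_apply, Matrix.mulVec, dotProduct]
      calc (∑ i, (N * M) i j ^ 2) = ∑ i, (N.mulVec (fun k => M k j)) i ^ 2 :=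
            Finset.sum_congr rfl fun i _ => by rw [heq i]
        _ ≤ _ := mulVec_sq_le hN hd _
    calc (∑ i, ∑ j, (N * M) i j ^ 2) = ∑ j, ∑ i, (N * M) i j ^ 2 := Finset.sum_comm
      _ ≤ ∑ j, (eigMax N)^2 * ∑ k, M k j ^ 2 := Finset.sum_le_sum fun j _ => hcol j
      _ = (eigMax N)^2 * ∑ j, ∑ i, M i j ^ 2 := (Finset.mul_sum _ _ _).symm
      _ = (eigMax N)^2 * ∑ i, ∑ j, M i j ^ 2 := by rw [Finset.sum_comm]
  have := Real.sqrt_le_sqrt hsq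
  rw [frobNorm]
  refine le_trans this ?_
  rw [Real.sqrt_mul (sq_nonneg _), Real.sqrt_sq hmax, ← frobNorm]


private lemma frobInner_eq_trace (A B : Matrix (Fin d) (Fin d) ℝ) (hB : Bᵀ = B) :
    frobInner A B = (A * B).trace := by
  simp only [frobInner, Matrix.trace, Matrix.diag_apply, Matrix.mul_apply]
  refine Finset.sum_congr rfl fun i _ => Finset.sum_congr rfl fun j _ => ?_
  have h : B j i = B i j := congrFun (congrFun hB i) j
  rw [h]

private lemma conj_quad {Q₀ Q₁ T : Matrix (Fin d) (Fin d) ℝ} (hTt : Tᵀ = T)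
    (hTQT : T * Q₀ * T = Q₁) {u : Fin d → ℝ} {t : ℝ} (hu : T.mulVec u = t • u) :
    u ⬝ᵥ Q₁.mulVec u = t ^ 2 * (u ⬝ᵥ Q₀.mulVec u) := by
  rw [← hTQT, ← Matrix.mulVec_mulVec, ← Matrix.mulVec_mulVec,
    Matrix.dotProduct_mulVec u T _, ← Matrix.mulVec_transpose, hTt, hu,
    Matrix.mulVec_smul, smul_dotProduct, dotProduct_smul]
  simp only [smul_eq_mul]
  ring

private lemma exists_T {Q₀ Q₁ : Matrix (Fin d) (Fin d) ℝ} (hQ₀ : Q₀.PosDef) (hQ₁ : Q₁.PosDef) :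
    ∃ T : Matrix (Fin d) (Fin d) ℝ, T.PosSemidef ∧ T * Q₀ * T = Q₁ ∧
      BW2 Q₀ Q₁ = ((T - 1) * Q₀ * (T - 1)).trace ∧
      ((Q₁ - Q₀) * (T - 1)).trace = (((T - 1) * Q₀ * (T - 1)) * (T + 1)).trace := by
  classical
  set s := msqrt Q₀ with hsdef
  have hsPSD : s.PosSemidef := msqrt_posSemidef hQ₀.posSemidef
  have hss : s * s = Q₀ := msqrt_mul_self hQ₀.posSemidef
  have hst : sᵀ = s := psd_transpose_eq' hsPSD
  have hdets : s.det ≠ 0 := by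
    intro h
    have h2 : s.det * s.det = Q₀.det := by rw [← Matrix.det_mul, hss]
    rw [h, mul_zero] at h2
    exact absurd h2.symm (ne_of_gt hQ₀.det_pos)
  have hs_unit : IsUnit s.det := isUnit_iff_ne_zero.mpr hdets
  have hinv1 : s⁻¹ * s = 1 := Matrix.nonsing_inv_mul s hs_unit
  have hinv2 : s * s⁻¹ = 1 := Matrix.mul_nonsing_inv s hs_unit
  have hM : (s * Q₁ * s).PosSemidef := by
    have h := hQ₁.posSemidef.conjTranspose_mul_mul_same s
    rwa [Matrix.conjTranspose_eq_transpose_of_trivial, hst] at h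
  set R := msqrt (s * Q₁ * s) with hRdef
  have hRR : R * R = s * Q₁ * s := msqrt_mul_self hM
  have hRPSD : R.PosSemidef := msqrt_posSemidef hM
  have hsinvT : (s⁻¹)ᵀ = s⁻¹ := by rw [Matrix.transpose_nonsing_inv, hst]
  refine ⟨s⁻¹ * R * s⁻¹, ?_, ?_, ?_, ?_⟩
  · have h := hRPSD.conjTranspose_mul_mul_same s⁻¹
    rwa [Matrix.conjTranspose_eq_transpose_of_trivial, hsinvT] at h
  · calc (s⁻¹ * R * s⁻¹) * Q₀ * (s⁻¹ * R * s⁻¹)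
        = (s⁻¹ * R * s⁻¹) * (s * s) * (s⁻¹ * R * s⁻¹) := by rw [hss]
      _ = s⁻¹ * R * ((s⁻¹ * s) * (s * s⁻¹)) * R * s⁻¹ := by noncomm_ring
      _ = s⁻¹ * (R * R) * s⁻¹ := by rw [hinv1, hinv2]; noncomm_ring
      _ = s⁻¹ * (s * Q₁ * s) * s⁻¹ := by rw [hRR]
      _ = (s⁻¹ * s) * Q₁ * (s * s⁻¹) := by noncomm_ring
      _ = Q₁ := by rw [hinv1, hinv2, one_mul, mul_one]
  · -- BW2 identity
    set T := s⁻¹ * R * s⁻¹ with hTdef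
    have hTQT : T * Q₀ * T = Q₁ := by
      calc T * Q₀ * T = (s⁻¹ * R * s⁻¹) * (s * s) * (s⁻¹ * R * s⁻¹) := by rw [hTdef, hss]
        _ = s⁻¹ * R * ((s⁻¹ * s) * (s * s⁻¹)) * R * s⁻¹ := by noncomm_ring
        _ = s⁻¹ * (R * R) * s⁻¹ := by rw [hinv1, hinv2]; noncomm_ring
        _ = s⁻¹ * (s * Q₁ * s) * s⁻¹ := by rw [hRR]
        _ = (s⁻¹ * s) * Q₁ * (s * s⁻¹) := by noncomm_ring
        _ = Q₁ := by rw [hinv1, hinv2, one_mul, mul_one]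
    have hQ0T : Q₀ * T = s * R * s⁻¹ := by
      calc Q₀ * T = (s * s) * (s⁻¹ * R * s⁻¹) := by rw [hTdef, hss]
        _ = s * (s * s⁻¹) * R * s⁻¹ := by noncomm_ring
        _ = s * R * s⁻¹ := by rw [hinv2]; noncomm_ring
    have htrR : (Q₀ * T).trace = R.trace := by
      rw [hQ0T, Matrix.trace_mul_cycle s R s⁻¹, hinv1, one_mul]
    have hBW : BW2 Q₀ Q₁ = Q₀.trace + Q₁.trace - 2 * R.trace := by
      rw [BW2, ← hsdef, ← hRdef]
    have hexp : (T - 1) * Q₀ * (T - 1) = T * Q₀ * T - T * Q₀ - Q₀ * T + Q₀ := by noncomm_ring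
    rw [hBW, hexp, Matrix.trace_add, Matrix.trace_sub, Matrix.trace_sub, hTQT,
      Matrix.trace_mul_comm T Q₀, htrR]
    ring
  · set T := s⁻¹ * R * s⁻¹ with hTdef
    have hTQT : T * Q₀ * T = Q₁ := by
      calc T * Q₀ * T = (s⁻¹ * R * s⁻¹) * (s * s) * (s⁻¹ * R * s⁻¹) := by rw [hTdef, hss]
        _ = s⁻¹ * R * ((s⁻¹ * s) * (s * s⁻¹)) * R * s⁻¹ := by noncomm_ring
        _ = s⁻¹ * (R * R) * s⁻¹ := by rw [hinv1, hinv2]; noncomm_ring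
        _ = s⁻¹ * (s * Q₁ * s) * s⁻¹ := by rw [hRR]
        _ = (s⁻¹ * s) * Q₁ * (s * s⁻¹) := by noncomm_ring
        _ = Q₁ := by rw [hinv1, hinv2, one_mul, mul_one]
    have e1 : (Q₁ - Q₀) * (T - 1) = T * Q₀ * (T * T) - T * Q₀ * T - Q₀ * T + Q₀ := by
      rw [← hTQT]; noncomm_ring
    have e2 : ((T - 1) * Q₀ * (T - 1)) * (T + 1)
        = T * Q₀ * (T * T) - T * Q₀ - Q₀ * (T * T) + Q₀ := by noncomm_ring
    have h3 : (T * Q₀ * T).trace = (Q₀ * (T * T)).trace := by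
      rw [Matrix.trace_mul_cycle T Q₀ T, Matrix.trace_mul_comm (T * T) Q₀]
    have h4 : (Q₀ * T).trace = (T * Q₀).trace := Matrix.trace_mul_comm Q₀ T
    rw [e1, e2, Matrix.trace_add, Matrix.trace_add, Matrix.trace_sub, Matrix.trace_sub,
      Matrix.trace_sub, Matrix.trace_sub, h3, h4]
    ring


private lemma rpow_neg_two {a : ℝ} (ha : 0 < a) : a ^ (-2 : ℝ) = (a ^ 2)⁻¹ := by
  rw [show (-2 : ℝ) = -(2 : ℝ) by norm_num, Real.rpow_neg ha.le,
    show (2 : ℝ) = ((2 : ℕ) : ℝ) by norm_num, Real.rpow_natCast]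

private lemma endgame_upper {a A a1 D F n t : ℝ} (ha : 0 < a) (haA : a ≤ A) (ha1 : 0 < a1)
    (ht : 0 ≤ t) (hn : 0 ≤ n) (hF : 0 ≤ F) (hD : 0 ≤ D)
    (h1 : (1 + t) * D ≤ F * n) (h2 : a * n ^ 2 ≤ D) (h3 : a1 ≤ A * t ^ 2) :
    D ≤ A * a ^ (-2 : ℝ) / (1 + A⁻¹ * a1) * F ^ 2 := by
  have hA : 0 < A := lt_of_lt_of_le ha haA
  rw [rpow_neg_two ha]
  have hc : (0 : ℝ) < 1 + A⁻¹ * a1 := by positivity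
  rw [div_mul_eq_mul_div, le_div_iff₀ hc,
    show A * (a ^ 2)⁻¹ * F ^ 2 = A * F ^ 2 / a ^ 2 by ring,
    le_div_iff₀ (by positivity : (0:ℝ) < a ^ 2)]
  -- goal : D * (1 + A⁻¹ * a1) * a ^ 2 ≤ A * F ^ 2
  have ht2 : A⁻¹ * a1 ≤ t ^ 2 := by
    rw [inv_mul_le_iff₀ hA]
    exact h3
  have hkey : a * (1 + t) ^ 2 * D ^ 2 ≤ F ^ 2 * D := by
    have hsq : ((1 + t) * D) ^ 2 ≤ (F * n) ^ 2 := by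
      have hl : 0 ≤ (1 + t) * D := by positivity
      nlinarith
    nlinarith [mul_le_mul_of_nonneg_left h2 (sq_nonneg F),
      mul_le_mul_of_nonneg_left hsq ha.le]
  rcases eq_or_lt_of_le hD with hD0 | hD0
  · rw [← hD0]
    norm_num
    positivity
  · have hdiv : a * (1 + t) ^ 2 * D ≤ F ^ 2 := by
      have h5 := mul_le_mul_of_nonneg_right hkey (le_of_lt (inv_pos.mpr hD0))
      calc a * (1 + t) ^ 2 * D = a * (1 + t) ^ 2 * D ^ 2 * D⁻¹ := by
            field_simp
        _ ≤ F ^ 2 * D * D⁻¹ := h5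
        _ = F ^ 2 := by field_simp
    have e1 : D * (1 + A⁻¹ * a1) * a ^ 2 ≤ D * (1 + t ^ 2) * a ^ 2 := by
      nlinarith [mul_le_mul_of_nonneg_left ht2 (by positivity : (0:ℝ) ≤ D * a ^ 2)]
    have e2 : D * (1 + t ^ 2) * a ^ 2 ≤ a * (a * (1 + t) ^ 2 * D) := by
      nlinarith [mul_nonneg (mul_nonneg (sq_nonneg a) hD0.le) ht]
    have e3 : a * (a * (1 + t) ^ 2 * D) ≤ a * F ^ 2 :=
      mul_le_mul_of_nonneg_left hdiv ha.le
    have e4 : a * F ^ 2 ≤ A * F ^ 2 := mul_le_mul_of_nonneg_right haA (sq_nonneg F)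
    linarith

private lemma endgame_lower {a A A1 D F n t : ℝ} (ha : 0 < a) (haA : a ≤ A) (hA1 : 0 < A1)
    (ht : 0 ≤ t) (hD : 0 ≤ D) (hn : 0 ≤ n) (hF : 0 ≤ F)
    (h1 : F ≤ A * (1 + t) * n) (h2 : a * n ^ 2 ≤ D) (h3 : a * t ^ 2 ≤ A1) :
    1 / 2 * (a * A ^ (-2 : ℝ) / (1 + a⁻¹ * A1)) * F ^ 2 ≤ D := by
  have hA : 0 < A := lt_of_lt_of_le ha haA
  rw [rpow_neg_two hA]
  have hc : (0 : ℝ) < 1 + a⁻¹ * A1 := by positivity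
  rw [show 1 / 2 * (a * (A ^ 2)⁻¹ / (1 + a⁻¹ * A1)) * F ^ 2
      = a * F ^ 2 / (2 * A ^ 2 * (1 + a⁻¹ * A1)) by field_simp,
    div_le_iff₀ (by positivity : (0:ℝ) < 2 * A ^ 2 * (1 + a⁻¹ * A1))]
  have ht2 : t ^ 2 ≤ a⁻¹ * A1 := by
    rw [inv_mul_eq_div, le_div_iff₀ ha]
    linarith
  have hF2 : F ^ 2 ≤ A ^ 2 * (1 + t) ^ 2 * n ^ 2 := by
    have h0 : 0 ≤ A * (1 + t) * n := by positivity
    nlinarith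
  have e1 : a * F ^ 2 ≤ a * (A ^ 2 * (1 + t) ^ 2 * n ^ 2) :=
    mul_le_mul_of_nonneg_left hF2 ha.le
  have e2 : a * (A ^ 2 * (1 + t) ^ 2 * n ^ 2) ≤ a * (A ^ 2 * (2 * (1 + t ^ 2)) * n ^ 2) := by
    nlinarith [mul_nonneg (mul_nonneg (mul_nonneg ha.le (sq_nonneg A)) (sq_nonneg n))
      (sq_nonneg (1 - t))]
  have e3 : a * (A ^ 2 * (2 * (1 + t ^ 2)) * n ^ 2) = 2 * A ^ 2 * (1 + t ^ 2) * (a * n ^ 2) := by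
    ring
  have e4 : 2 * A ^ 2 * (1 + t ^ 2) * (a * n ^ 2) ≤ 2 * A ^ 2 * (1 + t ^ 2) * D :=
    mul_le_mul_of_nonneg_left h2 (by positivity)
  have e5 : 2 * A ^ 2 * (1 + t ^ 2) * D ≤ D * (2 * A ^ 2 * (1 + a⁻¹ * A1)) := by
    nlinarith [mul_le_mul_of_nonneg_left ht2 (by positivity : (0:ℝ) ≤ 2 * A ^ 2 * D)]
  linarith



/-- Comparison between the squared Bures–Wasserstein distance and the squared
Frobenius distance for positive definite matrices. -/
theorem stmt10 {d : ℕ} (Q₀ Q₁ : Matrix (Fin d) (Fin d) ℝ)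
    (hQ₀ : Q₀.PosDef) (hQ₁ : Q₁.PosDef) :
    (1 / 2) * (eigMin Q₀ * eigMax Q₀ ^ (-2 : ℝ) / (1 + (eigMin Q₀)⁻¹ * eigMax Q₁)) *
        frobNorm (Q₁ - Q₀) ^ 2 ≤ BW2 Q₀ Q₁ ∧
      BW2 Q₀ Q₁ ≤ (eigMax Q₀ * eigMin Q₀ ^ (-2 : ℝ) / (1 + (eigMax Q₀)⁻¹ * eigMin Q₁)) *
        frobNorm (Q₁ - Q₀) ^ 2 := by
  rcases Nat.eq_zero_or_pos d with hd0 | hd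
  · subst hd0
    have hfn : frobNorm (Q₁ - Q₀) = 0 := by
      simp [frobNorm]
    have hbw : BW2 Q₀ Q₁ = 0 := by
      simp [BW2, Matrix.trace]
    rw [hfn, hbw]
    norm_num
  · obtain ⟨T, hTpsd, hTQT, hDeq, hIdB⟩ := exists_T hQ₀ hQ₁
    have hTt : Tᵀ = T := psd_transpose_eq' hTpsd
    have hΔt : (T - 1)ᵀ = T - 1 := by rw [Matrix.transpose_sub, hTt, Matrix.transpose_one]
    obtain ⟨-, -, hQ₀lb, hQ₀ub⟩ := eigen_package hQ₀.isHermitian hd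
    obtain ⟨-, -, hQ₁lb, hQ₁ub⟩ := eigen_package hQ₁.isHermitian hd
    obtain ⟨⟨u, hu1, huv, -⟩, ⟨w, hw1, hwv, -⟩, hTlb, -⟩ := eigen_package hTpsd.1 hd
    have ha := eigMin_pos hQ₀ hd
    have haA := eigMin_le_eigMax hQ₀.isHermitian hd
    have ha1 := eigMin_pos hQ₁ hd
    have hA1a1 := eigMin_le_eigMax hQ₁.isHermitian hd
    have htm := eigMin_nonneg hTpsd hd
    have htp := eigMax_nonneg hTpsd hd
    have hcq := conj_quad hTt hTQT huv
    have f6a : eigMin Q₁ ≤ eigMax Q₀ * (eigMin T) ^ 2 := by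
      have l1 := hQ₁lb u; rw [hu1, mul_one] at l1
      have l2 := hQ₀ub u; rw [hu1, mul_one] at l2
      nlinarith [sq_nonneg (eigMin T)]
    have hcq2 := conj_quad hTt hTQT hwv
    have f6b : eigMin Q₀ * (eigMax T) ^ 2 ≤ eigMax Q₁ := by
      have l1 := hQ₁ub w; rw [hw1, mul_one] at l1
      have l2 := hQ₀lb w; rw [hw1, mul_one] at l2
      nlinarith [sq_nonneg (eigMax T)]
    have hDtr : BW2 Q₀ Q₁ = ((T - 1)ᵀ * Q₀ * (T - 1)).trace := by rw [hΔt, hDeq]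
    have f1 : eigMin Q₀ * frobNorm (T - 1) ^ 2 ≤ BW2 Q₀ Q₁ := by
      rw [hDtr, frobNorm_sq]
      exact le_trace_conj hQ₀lb (T - 1)
    have hDnn : 0 ≤ BW2 Q₀ Q₁ :=
      le_trans (by positivity : (0:ℝ) ≤ eigMin Q₀ * frobNorm (T - 1) ^ 2) f1
    have hXpsd : ((T - 1) * Q₀ * (T - 1)).PosSemidef := by
      have h := hQ₀.posSemidef.conjTranspose_mul_mul_same (T - 1)
      rwa [Matrix.conjTranspose_eq_transpose_of_trivial, hΔt] at h
    have hSlb : ∀ v : Fin d → ℝ, (1 + eigMin T) * (∑ k, v k ^ 2) ≤ v ⬝ᵥ (T + 1).mulVec v := by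
      intro v
      have h := hTlb v
      have hof : v ⬝ᵥ (T + 1).mulVec v = v ⬝ᵥ T.mulVec v + ∑ k, v k ^ 2 := by
        rw [Matrix.add_mulVec, Matrix.one_mulVec, dotProduct_add]
        congr 1
        simp [dotProduct, pow_two]
      rw [hof]
      linarith
    have f3 : (1 + eigMin T) * BW2 Q₀ Q₁ ≤ frobInner (Q₁ - Q₀) (T - 1) := by
      rw [frobInner_eq_trace _ _ hΔt, hIdB, hDeq]
      exact trace_mul_psd_ge hXpsd hSlb
    have f4 : frobInner (Q₁ - Q₀) (T - 1) ≤ frobNorm (Q₁ - Q₀) * frobNorm (T - 1) :=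
      frobInner_le _ _
    have hQdiff : Q₁ - Q₀ = (T - 1) * Q₀ * T + Q₀ * (T - 1) := by rw [← hTQT]; noncomm_ring
    have f5 : frobNorm (Q₁ - Q₀) ≤ eigMax Q₀ * (1 + eigMax T) * frobNorm (T - 1) := by
      rw [hQdiff]
      refine le_trans (frobNorm_triangle _ _) ?_
      have g1 : frobNorm ((T - 1) * Q₀ * T) ≤ frobNorm ((T - 1) * Q₀) * eigMax T :=
        frobNorm_mul_right hTpsd hd _
      have g2 : frobNorm ((T - 1) * Q₀) ≤ frobNorm (T - 1) * eigMax Q₀ :=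
        frobNorm_mul_right hQ₀.posSemidef hd _
      have g3 : frobNorm (Q₀ * (T - 1)) ≤ eigMax Q₀ * frobNorm (T - 1) :=
        frobNorm_mul_left hQ₀.posSemidef hd _
      have g4 : frobNorm ((T - 1) * Q₀) * eigMax T ≤ frobNorm (T - 1) * eigMax Q₀ * eigMax T :=
        mul_le_mul_of_nonneg_right g2 htp
      nlinarith
    constructor
    · exact endgame_lower ha haA (lt_of_lt_of_le ha1 hA1a1) htp hDnn (frobNorm_nonneg _)
        (frobNorm_nonneg _) f5 f1 f6b
    · exact endgame_upper ha haA ha1 htm (frobNorm_nonneg _) (frobNorm_nonneg _) hDnn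
        (le_trans f3 f4) f1 f6a


end BWFR
end
end

section
/- Let c₁, α, β, B > 0 and C₁ > 1. Then for every t > 0: min{1, B^β · C₁ · exp(−c₁·t^α)} ≤ C₁ · exp( −c₁·t^α / (1 + β·log(max(1,B)) / log(C₁)) ). -/
/-- Let `c₁, α, β, B > 0` and `C₁ > 1`. Then for every `t > 0`:
`min 1 (B^β C₁ exp(−c₁ t^α)) ≤ C₁ exp(−c₁ t^α / (1 + β log(max 1 B) / log C₁))`. -/
theorem stmt13 (c₁ α β B C₁ : ℝ) (hc₁ : 0 < c₁) (hα : 0 < α) (hβ : 0 < β) (hB : 0 < B)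
    (hC₁ : 1 < C₁) :
    ∀ t : ℝ, 0 < t →
      min 1 (B ^ β * C₁ * Real.exp (-(c₁ * t ^ α))) ≤
        C₁ * Real.exp (-(c₁ * t ^ α) / (1 + β * Real.log (max 1 B) / Real.log C₁)) := by
  intro t ht
  have hC₀ : 0 < C₁ := lt_trans one_pos hC₁
  set x := c₁ * t ^ α with hxdef
  have hxpos : 0 < x := mul_pos hc₁ (Real.rpow_pos_of_pos ht α)
  have hl : 0 < Real.log C₁ := Real.log_pos hC₁
  set l := Real.log C₁ with hldef
  have hM : (0:ℝ) ≤ Real.log (max 1 B) := Real.log_nonneg (le_max_left 1 B)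
  set L := β * Real.log (max 1 B) with hLdef
  have hL : 0 ≤ L := mul_nonneg hβ.le hM
  set D := 1 + L / l with hDdef
  have hD1 : (1:ℝ) ≤ D := le_add_of_nonneg_right (div_nonneg hL hl.le)
  have hDpos : 0 < D := lt_of_lt_of_le one_pos hD1
  have hlD : l * D = l + L := by
    rw [hDdef, mul_add, mul_one, mul_comm, div_mul_cancel₀ L (ne_of_gt hl)]
  clear_value x l L D
  have hBle : B ^ β ≤ Real.exp L := by
    rw [Real.rpow_def_of_pos hB, hLdef]
    apply Real.exp_le_exp.2
    rw [mul_comm]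
    exact mul_le_mul_of_nonneg_left (Real.log_le_log hB (le_max_right 1 B)) hβ.le
  by_cases h : x ≤ l + L
  · calc min 1 (B ^ β * C₁ * Real.exp (-x)) ≤ 1 := min_le_left _ _
      _ = C₁ * Real.exp (-l) := by
          rw [hldef, Real.exp_neg, Real.exp_log hC₀, mul_inv_cancel₀ (ne_of_gt hC₀)]
      _ ≤ C₁ * Real.exp (-x / D) := by
          apply mul_le_mul_of_nonneg_left _ hC₀.le
          apply Real.exp_le_exp.2
          rw [neg_div, neg_le_neg_iff, div_le_iff₀ hDpos]
          linarith [hlD]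
  · push_neg at h
    have hkey : L ≤ x - x / D := by
      have hxD : x / D * D = x := div_mul_cancel₀ x (ne_of_gt hDpos)
      have hly : l ≤ x / D := by
        rw [le_div_iff₀ hDpos, hlD]; exact h.le
      have h1 : l * (D - 1) ≤ x / D * (D - 1) :=
        mul_le_mul_of_nonneg_right hly (by linarith)
      nlinarith [h1, hlD, hxD]
    calc min 1 (B ^ β * C₁ * Real.exp (-x)) ≤ B ^ β * C₁ * Real.exp (-x) :=
          min_le_right _ _
      _ ≤ Real.exp L * C₁ * Real.exp (-x) := by
          apply mul_le_mul_of_nonneg_right _ (Real.exp_pos _).le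
          exact mul_le_mul_of_nonneg_right hBle hC₀.le
      _ = C₁ * Real.exp (L + -x) := by rw [Real.exp_add]; ring
      _ ≤ C₁ * Real.exp (-x / D) := by
          apply mul_le_mul_of_nonneg_left _ hC₀.le
          apply Real.exp_le_exp.2
          rw [neg_div]
          linarith
end
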